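/- Let G have m ≥ 1 edges and let β : E(G) → ℝ satisfy β_e > 0 for every edge e and Σ_{e ∈ E(G)} β_e = 1, with β_min = min_{e ∈ E(G)} β_e. If R_g is the geometric mean of the d-radii of the edges of G, then SO(G) ≤ (1/β_min)·(Σ_{e ∈ E(G)} β_e |z_e| − ∏_{e ∈ E(G)} |z_e|^{β_e}) + m·R_g. -/

import Mathlib

/- The key step is a refinement of weighted AM–GM: when every weight is at least `c`, the weighted
geometric mean `∏ aₑ^{βₑ}` equals `g^{c·m} · ∏ aₑ^{βₑ - c}` with `g` the unweighted geometric mean,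
and AM–GM applied to the `m + 1` values `g, aₑ` with the weights `c·m, βₑ - c` bounds it by
`c·m·g + ∑ (βₑ - c)·aₑ`. Taking `c = β_min` and dividing by `β_min` gives the bound on `SO(G)`. -/

open Finset Real

noncomputable def dRad {V : Type*} [Fintype V] (G : SimpleGraph V) [DecidableRel G.Adj]
    (e : Sym2 V) : ℝ :=
  Sym2.lift ⟨fun u v => Real.sqrt ((G.degree u : ℝ) ^ 2 + (G.degree v : ℝ) ^ 2),
    fun u v => by simp [add_comm]⟩ e

noncomputable def somborIndex {V : Type*} [Fintype V] [DecidableEq V] (G : SimpleGraph V)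
    [DecidableRel G.Adj] : ℝ :=
  ∑ e ∈ G.edgeFinset, dRad G e

theorem Real.geom_mean_weighted_le_sub_arith_add_geom_mean {ι : Type*} (s : Finset ι)
    (w a : ι → ℝ) (c : ℝ) (hc : 0 ≤ c) (hcw : ∀ i ∈ s, c ≤ w i) (hw : ∑ i ∈ s, w i = 1)
    (ha : ∀ i ∈ s, 0 ≤ a i) :
    ∏ i ∈ s, a i ^ w i ≤
      ∑ i ∈ s, (w i - c) * a i + c * #s * (∏ i ∈ s, a i) ^ ((1 : ℝ) / #s) := by
  set g := (∏ i ∈ s, a i) ^ ((1 : ℝ) / #s)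
  have hs : s.Nonempty := nonempty_of_sum_ne_zero (by rw [hw]; exact one_ne_zero)
  have hcard : (#s : ℝ) ≠ 0 := by exact_mod_cast hs.card_pos.ne'
  have hg_nonneg : 0 ≤ g := rpow_nonneg (prod_nonneg ha) _
  have hg_pow : g ^ (c * #s) = ∏ i ∈ s, a i ^ c := by
    rw [← rpow_mul (prod_nonneg ha), finsetProd_rpow s a ha]
    congr 1
    field_simp
  have hsplit : ∏ i ∈ s, a i ^ w i = g ^ (c * #s) * ∏ i ∈ s, a i ^ (w i - c) := by
    rw [hg_pow, ← prod_mul_distrib]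
    refine prod_congr rfl fun i hi => ?_
    rw [← rpow_add_of_nonneg (ha i hi) hc (sub_nonneg.2 (hcw i hi)), add_sub_cancel]
  calc ∏ i ∈ s, a i ^ w i
      = ∏ i ∈ insertNone s, (i.elim g a) ^ (i.elim (c * #s) (w · - c)) := by
        rw [prod_insertNone]; exact hsplit
    _ ≤ ∑ i ∈ insertNone s, i.elim (c * #s) (w · - c) * i.elim g a := by
        refine geom_mean_le_arith_mean_weighted _ _ _ ?_ ?_ ?_
        · exact forall_mem_insertNone.2
            ⟨mul_nonneg hc (Nat.cast_nonneg _), fun i hi => sub_nonneg.2 (hcw i hi)⟩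
        · simp only [sum_insertNone, Option.elim, sum_sub_distrib, hw, sum_const, nsmul_eq_mul]
          ring
        · exact forall_mem_insertNone.2 ⟨hg_nonneg, ha⟩
    _ = ∑ i ∈ s, (w i - c) * a i + c * #s * g := by
        rw [sum_insertNone]; simp only [Option.elim]; ring

theorem dRad_nonneg {V : Type*} [Fintype V] (G : SimpleGraph V) [DecidableRel G.Adj]
    (e : Sym2 V) : 0 ≤ dRad G e := by
  induction e using Sym2.ind with
  | _ u v => exact sqrt_nonneg _

theorem stmt10_general {V : Type*} [Fintype V] [DecidableEq V] (G : SimpleGraph V) [DecidableRel G.Adj]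
    (m : ℕ) (hm : G.edgeFinset.card = m)
    (β : Sym2 V → ℝ) (hβpos : ∀ e ∈ G.edgeFinset, 0 < β e)
    (hβsum : ∑ e ∈ G.edgeFinset, β e = 1)
    (βmin : ℝ) (hlb : ∀ e ∈ G.edgeFinset, βmin ≤ β e)
    (hmem : ∃ e ∈ G.edgeFinset, β e = βmin) :
    somborIndex G ≤
      (1 / βmin) * ((∑ e ∈ G.edgeFinset, β e * dRad G e)
          - ∏ e ∈ G.edgeFinset, dRad G e ^ β e)
        + (m : ℝ) * (∏ e ∈ G.edgeFinset, dRad G e) ^ ((1 : ℝ) / m) := by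
  obtain ⟨e₀, he₀, rfl⟩ := hmem
  have hβmin : 0 < β e₀ := hβpos e₀ he₀
  have key := geom_mean_weighted_le_sub_arith_add_geom_mean G.edgeFinset β (dRad G) (β e₀)
    hβmin.le hlb hβsum fun e _ => dRad_nonneg G e
  simp only [sub_mul, sum_sub_distrib, ← mul_sum, hm] at key
  rw [somborIndex, one_div_mul_eq_div, ← sub_le_iff_le_add, le_div_iff₀ hβmin]
  linarith

/-- If `β` assigns positive weights summing to `1` to the edges of `G`, `β_min` is the smallest
weight, and `R_g` is the geometric mean of the d-radii, then
`SO(G) ≤ (1/β_min)·(∑ β_e|z_e| − ∏ |z_e|^{β_e}) + m·R_g`. -/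
theorem stmt10 {V : Type*} [Fintype V] [DecidableEq V] (G : SimpleGraph V) [DecidableRel G.Adj]
    (m : ℕ) (hm : G.edgeFinset.card = m) (h1 : 1 ≤ m)
    (β : Sym2 V → ℝ) (hβpos : ∀ e ∈ G.edgeFinset, 0 < β e)
    (hβsum : ∑ e ∈ G.edgeFinset, β e = 1)
    (βmin : ℝ) (hlb : ∀ e ∈ G.edgeFinset, βmin ≤ β e)
    (hmem : ∃ e ∈ G.edgeFinset, β e = βmin) :
    somborIndex G ≤
      (1 / βmin) * ((∑ e ∈ G.edgeFinset, β e * dRad G e)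
          - ∏ e ∈ G.edgeFinset, dRad G e ^ β e)
        + (m : ℝ) * (∏ e ∈ G.edgeFinset, dRad G e) ^ ((1 : ℝ) / m) :=
  stmt10_general G m hm β hβpos hβsum βmin hlb hmem
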